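/- arXiv:2210.15622 — 3 statements merged into one kernel-verified Lean document; each statement's English description precedes it below -/
import Mathlib

section
/- Let d ≥ 2 and let ℓ be a d-variate stable tail dependence function in d-norm form, i.e. ℓ(x) = E[max_{1≤i≤d} x_i W_i] for some integrable, almost surely positive random variables W_1,…,W_d each with mean 1. Let S = (S_1,…,S_d) be a random vector whose joint survival function is P(S_1 > s_1, …, S_d > s_d) = (max(0, 1 − ℓ(s_1,…,s_d)))^{d−1} for all s ∈ [0,∞)^d, and set c_n = (1 − (1 − 1/n)^{1/(d−1)})^{−1} for n ≥ 2. Then for every s = (s_1,…,s_d) with all s_i > 0, n·(1 − P(1/S_1 ≤ c_n s_1, …, 1/S_d ≤ c_n s_d)) → ℓ(1/s_1,…,1/s_d) as n → ∞. In particular, 1/S is in the maximum domain of attraction of a multivariate extreme-value distribution with unit Fréchet margins and stable tail dependence function ℓ. -/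
open MeasureTheory ProbabilityTheory Filter
open scoped Topology

/-!
Write `ε n = (c n)⁻¹` and `a = ℓ (1 / s)`. Up to the null set where some `S i ≤ 0`, the event
`1 / S ≤ c n • s` is the closed orthant `ε n / s ≤ S`. Since `ℓ` is Lipschitz, the survival
formula passes from open to closed orthants, and by homogeneity `ℓ (ε n / s) = ε n * a`, so the
event has probability `(1 - a * ε n) ^ (d - 1)`. The constants are chosen so that
`1 - (1 - ε n) ^ (d - 1) = 1 / n`; the quantity in question is therefore the ratio
`(1 - (1 - a ε) ^ (d - 1)) / (1 - (1 - ε) ^ (d - 1))` at `ε = ε n → 0⁺`, which tends to `a`,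
the quotient of the derivatives at `0`.
-/

section

variable {Ω ι : Type*} [MeasurableSpace Ω] {μ : Measure Ω} {W : ι → Ω → ℝ}

lemma abs_iSup_le_sum_abs [Fintype ι] [Nonempty ι] (f : ι → ℝ) : |⨆ i, f i| ≤ ∑ i, |f i| := by
  obtain ⟨i₀⟩ := ‹Nonempty ι›
  have hbdd : BddAbove (Set.range f) := (Set.finite_range f).bddAbove
  have hle : ∀ i, |f i| ≤ ∑ j, |f j| := fun i =>
    Finset.single_le_sum (f := fun j => |f j|) (fun j _ => abs_nonneg _) (Finset.mem_univ i)
  rw [abs_le]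
  exact ⟨(neg_le_neg (hle i₀)).trans ((neg_abs_le _).trans (le_ciSup hbdd i₀)),
    ciSup_le fun i => (le_abs_self _).trans (hle i)⟩

lemma integrable_iSup [Fintype ι] [Nonempty ι] {f : ι → Ω → ℝ} (hf : ∀ i, Integrable (f i) μ) :
    Integrable (fun ω => ⨆ i, f i ω) μ :=
  Integrable.mono' (integrable_finsetSum _ fun i _ => (hf i).abs)
    (AEMeasurable.iSup fun i => (hf i).aemeasurable).aestronglyMeasurable
    (ae_of_all _ fun _ => abs_iSup_le_sum_abs _)

noncomputable def dNorm (μ : Measure Ω) (W : ι → Ω → ℝ) (x : ι → ℝ) : ℝ :=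
  ∫ ω, ⨆ i, x i * W i ω ∂μ

lemma dNorm_smul {r : ℝ} (hr : 0 ≤ r) (x : ι → ℝ) : dNorm μ W (r • x) = r * dNorm μ W x := by
  simp only [dNorm, ← integral_const_mul, Real.mul_iSup_of_nonneg hr, Pi.smul_apply, smul_eq_mul,
    mul_assoc]

lemma lipschitzWith_dNorm [Fintype ι] [Nonempty ι] (hW : ∀ i, Integrable (W i) μ) :
    LipschitzWith (Real.toNNReal (∫ ω, ∑ i, |W i ω| ∂μ)) (dNorm μ W) := by
  refine LipschitzWith.of_le_add_mul' _ fun x y => ?_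
  have hsum : Integrable (fun ω => ∑ i, |W i ω|) μ :=
    integrable_finsetSum _ fun i _ => (hW i).abs
  have hint : ∀ z : ι → ℝ, Integrable (fun ω => ⨆ i, z i * W i ω) μ := fun z =>
    integrable_iSup fun i => (hW i).const_mul (z i)
  rw [← integral_mul_const, dNorm, dNorm, ← integral_add (hint y) (hsum.mul_const _)]
  refine integral_mono (hint x) ((hint y).add (hsum.mul_const _)) fun ω => ciSup_le fun i => ?_
  have hy : y i * W i ω ≤ ⨆ j, y j * W j ω :=
    le_ciSup (f := fun j => y j * W j ω) (Set.finite_range _).bddAbove i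
  have hdist : |x i - y i| ≤ dist x y := by
    simpa [Real.dist_eq] using dist_le_pi_dist x y i
  have hW_le : |W i ω| ≤ ∑ j, |W j ω| :=
    Finset.single_le_sum (f := fun j => |W j ω|) (fun j _ => abs_nonneg _) (Finset.mem_univ i)
  calc x i * W i ω = y i * W i ω + W i ω * (x i - y i) := by ring
    _ ≤ y i * W i ω + |W i ω| * |x i - y i| := by
        rw [← abs_mul]; gcongr; exact le_abs_self _
    _ ≤ (⨆ j, y j * W j ω) + (∑ j, |W j ω|) * dist x y := by
        gcongr

lemma measurableSet_forall_lt [Countable ι] {S : ι → Ω → ℝ} (hS : ∀ i, Measurable (S i))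
    (t : ι → ℝ) : MeasurableSet {ω | ∀ i, t i < S i ω} := by
  simp only [Set.ofPred_forall]
  exact MeasurableSet.iInter fun i => hS i measurableSet_Ioi

lemma measureReal_forall_le_eq [Finite ι] [IsFiniteMeasure μ] {S : ι → Ω → ℝ}
    (hS : ∀ i, Measurable (S i)) {G : (ι → ℝ) → ℝ} {t : ι → ℝ} (ht : ∀ i, 0 < t i)
    (hG : ContinuousAt G t)
    (hsurv : ∀ u : ι → ℝ, (∀ i, 0 ≤ u i) → μ.real {ω | ∀ i, u i < S i ω} = G u) :
    μ.real {ω | ∀ i, t i ≤ S i ω} = G t := by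
  have : Countable ι := Finite.to_countable
  set u : ℕ → ι → ℝ := fun m i => t i - 1 / ((m : ℝ) + 1)
  have hu : Tendsto u atTop (𝓝 t) := tendsto_pi_nhds.2 fun i => by
    simpa [u] using tendsto_one_div_add_atTop_nhds_zero_nat.const_sub (t i)
  have hanti : Antitone fun m => {ω | ∀ i, u m i < S i ω} := by
    intro m m' hmm' ω hω i
    refine lt_of_le_of_lt ?_ (hω i)
    simp only [u]
    gcongr
  have hinter : ⋂ m, {ω | ∀ i, u m i < S i ω} = {ω | ∀ i, t i ≤ S i ω} := by
    ext ω
    simp only [Set.mem_iInter, Set.mem_ofPred_eq, u]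
    refine ⟨fun h i => le_of_forall_pos_lt_add fun δ hδ => ?_, fun h m i => ?_⟩
    · obtain ⟨m, hm⟩ := exists_nat_one_div_lt hδ
      linarith [h m i]
    · linarith [h i, (Nat.one_div_pos_of_nat : (0 : ℝ) < 1 / (m + 1))]
  have hmeas_tendsto : Tendsto (fun m => μ.real {ω | ∀ i, u m i < S i ω}) atTop
      (𝓝 (μ.real {ω | ∀ i, t i ≤ S i ω})) := by
    rw [← hinter]
    exact (ENNReal.tendsto_toReal (measure_ne_top μ _)).comp <| tendsto_measure_iInter_atTop
      (fun m => (measurableSet_forall_lt hS _).nullMeasurableSet) hanti ⟨0, measure_ne_top μ _⟩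
  refine tendsto_nhds_unique (hmeas_tendsto.congr' ?_) (hG.tendsto.comp hu)
  have hpos : ∀ᶠ m in atTop, ∀ i, 0 ≤ u m i :=
    eventually_all.2 fun i => (tendsto_pi_nhds.1 hu i).eventually (eventually_ge_nhds (ht i))
  filter_upwards [hpos] with m hm
  exact hsurv _ hm

lemma ae_of_measureReal_eq_one [IsProbabilityMeasure μ] {p : Ω → Prop}
    (hp : NullMeasurableSet {ω | p ω} μ) (h : μ.real {ω | p ω} = 1) : ∀ᵐ ω ∂μ, p ω := by
  rw [ae_iff_measure_eq hp, measure_univ]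
  exact (ENNReal.toReal_eq_one_iff _).1 h

lemma one_div_le_inv_mul_iff {x ε s : ℝ} (hx : 0 < x) (hε : 0 < ε) (hs : 0 < s) :
    1 / x ≤ ε⁻¹ * s ↔ ε / s ≤ x := by
  rw [inv_mul_eq_div, div_le_div_iff₀ hx hε, div_le_iff₀ hs, one_mul, mul_comm]

/-- With `ι = Fin d` and `k = d - 1`, this says that `S` has the `ℓ`-simplex distribution. -/
def HasSimplexSurvival (μ : Measure Ω) (S : ι → Ω → ℝ) (ℓ : (ι → ℝ) → ℝ) (k : ℕ) : Prop :=
  ∀ u : ι → ℝ, (∀ i, 0 ≤ u i) → μ.real {ω | ∀ i, u i < S i ω} = max 0 (1 - ℓ u) ^ k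

namespace HasSimplexSurvival

variable {S : ι → Ω → ℝ} {ℓ : (ι → ℝ) → ℝ} {k : ℕ}

lemma ae_pos [IsProbabilityMeasure μ] [Countable ι] (h : HasSimplexSurvival μ S ℓ k)
    (hS : ∀ i, Measurable (S i)) (hℓ : ℓ 0 = 0) : ∀ᵐ ω ∂μ, ∀ i, 0 < S i ω :=
  ae_of_measureReal_eq_one (measurableSet_forall_lt hS 0).nullMeasurableSet
    (by simpa [hℓ] using h 0 fun _ => le_rfl)

lemma measureReal_one_div_le [Finite ι] [IsProbabilityMeasure μ] (h : HasSimplexSurvival μ S ℓ k)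
    (hS : ∀ i, Measurable (S i)) (hℓ : Continuous ℓ)
    (hℓ_smul : ∀ r : ℝ, 0 ≤ r → ∀ x, ℓ (r • x) = r * ℓ x) {ε : ℝ} (hε : 0 < ε) {s : ι → ℝ}
    (hs : ∀ i, 0 < s i) (hεs : ε * ℓ (fun i => 1 / s i) ≤ 1) :
    μ.real {ω | ∀ i, 1 / S i ω ≤ ε⁻¹ * s i} = (1 - ε * ℓ (fun i => 1 / s i)) ^ k := by
  have : Countable ι := Finite.to_countable
  have hevent : {ω | ∀ i, 1 / S i ω ≤ ε⁻¹ * s i} =ᵐ[μ] {ω | ∀ i, ε / s i ≤ S i ω} := by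
    filter_upwards [h.ae_pos hS (by simpa using hℓ_smul 0 le_rfl 0)] with ω hω
    simp only [eq_iff_iff]
    exact forall_congr' fun i => one_div_le_inv_mul_iff (hω i) hε (hs i)
  have hscale : (fun i => ε / s i) = ε • fun i => 1 / s i := by
    ext i; simp [div_eq_mul_inv]
  have hcont : Continuous fun t => max 0 (1 - ℓ t) ^ k :=
    (continuous_const.max (continuous_const.sub hℓ)).pow k
  rw [measureReal_congr hevent, measureReal_forall_le_eq hS (fun i => div_pos hε (hs i))
    hcont.continuousAt h, hscale, hℓ_smul ε hε.le, max_eq_right (by linarith)]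

end HasSimplexSurvival

lemma tendsto_div_of_hasDerivAt {f g : ℝ → ℝ} {f' g' x : ℝ} (hf : HasDerivAt f f' x)
    (hg : HasDerivAt g g' x) (hfx : f x = 0) (hgx : g x = 0) (hg' : g' ≠ 0) :
    Tendsto (fun y => f y / g y) (𝓝[≠] x) (𝓝 (f' / g')) := by
  refine ((hasDerivAt_iff_tendsto_slope.1 hf).div (hasDerivAt_iff_tendsto_slope.1 hg) hg').congr'
    ?_
  filter_upwards [self_mem_nhdsWithin] with y hyx
  have hy : y - x ≠ 0 := sub_ne_zero.2 hyx
  rw [Pi.div_apply, slope_def_field, slope_def_field, hfx, hgx, sub_zero, sub_zero,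
    div_div_div_cancel_right₀ hy]

lemma tendsto_one_sub_one_sub_mul_pow_div (a : ℝ) {k : ℕ} (hk : k ≠ 0) :
    Tendsto (fun x => (1 - (1 - a * x) ^ k) / (1 - (1 - x) ^ k)) (𝓝[≠] 0) (𝓝 a) := by
  have hderiv : ∀ b : ℝ, HasDerivAt (fun x => 1 - (1 - b * x) ^ k) (k * b) 0 := fun b => by
    simpa using ((((hasDerivAt_id (0 : ℝ)).const_mul b).const_sub 1).pow k).const_sub 1
  have hk' : (k : ℝ) ≠ 0 := Nat.cast_ne_zero.2 hk
  have h := tendsto_div_of_hasDerivAt (hderiv a) (hderiv 1) (by simp) (by simp) (by simpa)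
  simpa [mul_div_cancel_left₀ a hk'] using h

lemma tendsto_one_sub_one_sub_one_div_rpow {k : ℕ} (hk : k ≠ 0) :
    Tendsto (fun n : ℕ => 1 - (1 - 1 / (n : ℝ)) ^ (1 / (k : ℝ))) atTop (𝓝[>] 0) := by
  have hk' : (0 : ℝ) < 1 / k := by positivity
  refine tendsto_nhdsWithin_iff.2 ⟨?_, ?_⟩
  · have h := tendsto_one_div_atTop_nhds_zero_nat.const_sub (1 : ℝ)
    have hcont := Real.continuousAt_rpow_const (1 - 0 : ℝ) (1 / k) (Or.inl (by norm_num))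
    simpa using (hcont.tendsto.comp h).const_sub (1 : ℝ)
  · filter_upwards [eventually_ge_atTop 2] with n hn
    have hn' : (2 : ℝ) ≤ n := by exact_mod_cast hn
    have h1 : 1 / (n : ℝ) ≤ 1 := by rw [div_le_one (by linarith)]; linarith
    have h2 : 0 < 1 / (n : ℝ) := by positivity
    exact sub_pos.2 (Real.rpow_lt_one (by linarith) (by linarith) hk')

lemma tendsto_mul_one_sub_one_sub_mul_pow (a : ℝ) {k : ℕ} (hk : k ≠ 0) :
    Tendsto (fun n : ℕ => n * (1 - (1 - a * (1 - (1 - 1 / (n : ℝ)) ^ (1 / (k : ℝ)))) ^ k))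
      atTop (𝓝 a) := by
  refine ((tendsto_one_sub_one_sub_mul_pow_div a hk).comp
    ((tendsto_one_sub_one_sub_one_div_rpow hk).mono_right (nhdsGT_le_nhdsNE 0))).congr' ?_
  filter_upwards [eventually_gt_atTop 0] with n hn
  have hn' : (1 : ℝ) ≤ n := by exact_mod_cast hn
  have hbase : 0 ≤ 1 - 1 / (n : ℝ) := by
    rw [sub_nonneg, div_le_one (by linarith)]; exact hn'
  rw [Function.comp_apply, sub_sub_cancel, one_div (k : ℝ), Real.rpow_inv_natCast_pow hbase hk,
    sub_sub_cancel]
  field_simp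

end

theorem stmt_0_general
    {Ω : Type*} [MeasurableSpace Ω] (μ : Measure Ω) [IsProbabilityMeasure μ]
    (d : ℕ) (hd : 2 ≤ d)
    (W : Fin d → Ω → ℝ)
    (hWint : ∀ i, Integrable (W i) μ)
    (ℓ : (Fin d → ℝ) → ℝ)
    (hℓ : ∀ x : Fin d → ℝ, ℓ x = ∫ ω, (⨆ i, x i * W i ω) ∂μ)
    (S : Fin d → Ω → ℝ)
    (hSmeas : ∀ i, Measurable (S i))
    (hSsurv : ∀ s : Fin d → ℝ, (∀ i, 0 ≤ s i) →
      (μ {ω | ∀ i, s i < S i ω}).toReal = max 0 (1 - ℓ s) ^ (d - 1))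
    (c : ℕ → ℝ)
    (hc : ∀ n : ℕ, 2 ≤ n →
      c n = (1 - (1 - 1 / (n : ℝ)) ^ (1 / ((d : ℝ) - 1)))⁻¹)
    (s : Fin d → ℝ) (hs : ∀ i, 0 < s i) :
    Tendsto
      (fun n : ℕ =>
        (n : ℝ) * (1 - (μ {ω | ∀ i, 1 / S i ω ≤ c n * s i}).toReal))
      atTop (𝓝 (ℓ (fun i => 1 / s i))) := by
  have : Nonempty (Fin d) := ⟨⟨0, by omega⟩⟩
  obtain rfl : ℓ = dNorm μ W := funext hℓ
  have hsimplex : HasSimplexSurvival μ S (dNorm μ W) (d - 1) := hSsurv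
  have hk : d - 1 ≠ 0 := by omega
  have hdR : (d : ℝ) - 1 = ((d - 1 : ℕ) : ℝ) := by rw [Nat.cast_sub (by omega), Nat.cast_one]
  set a := dNorm μ W fun i => 1 / s i
  set ε : ℕ → ℝ := fun n => 1 - (1 - 1 / (n : ℝ)) ^ (1 / ((d - 1 : ℕ) : ℝ))
  have hε := tendsto_one_sub_one_sub_one_div_rpow hk
  have hε_small : ∀ᶠ n in atTop, ε n * a ≤ 1 :=
    ((hε.mono_right nhdsWithin_le_nhds).mul_const a).eventually_le_const (by simp)
  refine (tendsto_mul_one_sub_one_sub_mul_pow a hk).congr' ?_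
  filter_upwards [hε.eventually self_mem_nhdsWithin, hε_small, eventually_ge_atTop 2]
    with n hεn hεa hn
  rw [hc n hn, hdR, ← measureReal_def, hsimplex.measureReal_one_div_le hSmeas
    (lipschitzWith_dNorm hWint).continuous (fun r hr => dNorm_smul hr) hεn hs hεa]
  ring

/-- If `S` has the `ℓ`-simplex distribution for a stdf `ℓ` in d-norm form,
and `c n = (1 - (1 - 1/n)^(1/(d-1)))⁻¹`, then for every coordinatewise positive `s`,
`n * (1 - P(1/S₁ ≤ cₙ s₁, …, 1/S_d ≤ cₙ s_d)) → ℓ(1/s₁, …, 1/s_d)`; in particular `1/S` is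
in the maximum domain of attraction of a multivariate extreme-value distribution with unit
Fréchet margins and stable tail dependence function `ℓ`. -/
theorem stmt_0
    {Ω : Type*} [MeasurableSpace Ω] (μ : Measure Ω) [IsProbabilityMeasure μ]
    (d : ℕ) (hd : 2 ≤ d)
    (W : Fin d → Ω → ℝ)
    (hWmeas : ∀ i, Measurable (W i))
    (hWint : ∀ i, Integrable (W i) μ)
    (hWpos : ∀ i, ∀ᵐ ω ∂μ, 0 < W i ω)
    (hWmean : ∀ i, ∫ ω, W i ω ∂μ = 1)
    (ℓ : (Fin d → ℝ) → ℝ)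
    (hℓ : ∀ x : Fin d → ℝ, ℓ x = ∫ ω, (⨆ i, x i * W i ω) ∂μ)
    (S : Fin d → Ω → ℝ)
    (hSmeas : ∀ i, Measurable (S i))
    (hSsurv : ∀ s : Fin d → ℝ, (∀ i, 0 ≤ s i) →
      (μ {ω | ∀ i, s i < S i ω}).toReal = max 0 (1 - ℓ s) ^ (d - 1))
    (c : ℕ → ℝ)
    (hc : ∀ n : ℕ, 2 ≤ n →
      c n = (1 - (1 - 1 / (n : ℝ)) ^ (1 / ((d : ℝ) - 1)))⁻¹)
    (s : Fin d → ℝ) (hs : ∀ i, 0 < s i) :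
    Tendsto
      (fun n : ℕ =>
        (n : ℝ) * (1 - (μ {ω | ∀ i, 1 / S i ω ≤ c n * s i}).toReal))
      atTop (𝓝 (ℓ (fun i => 1 / s i))) :=
  stmt_0_general μ d hd W hWint ℓ hℓ S hSmeas hSsurv c hc s hs
end

section
/- (Asymptotic independence between a light-tailed cluster and a boundary-case cluster.) Let m_k, m_l ≥ 2. Let S_k and S_l be independent random variables with P(S_k > s) = (1 − s)^{m_k−1} and P(S_l > s) = (1 − s)^{m_l−1} for s ∈ [0,1]. Let (R_k, R_l) be a pair of positive random variables, independent of (S_k, S_l). Assume: (i) E[(1/R_k)^{1+ε}] < ∞ for some ε > 0, and (a_{nk}) are positive constants with n·P(1/S_k > a_{nk} x) → 1/x for all x > 0; set b_k = E[1/R_k]; (ii) (a_{nl}) are positive constants with n·P(1/(R_l S_l) > a_{nl} x) → 1/x for all x > 0. Then for all x, y > 0, n·P(1/(R_k S_k) > a_{nk} b_k x, 1/(R_l S_l) > a_{nl} y) → 0 as n → ∞. -/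
/-
Condition on `(R_k, R_l)`: given `R = r` the two events are independent, the first has probability
at most `(m_k - 1) / (c r_k)` (with `c = a_{nk} b_k x`), and the second has some probability
`g(r_l) ≤ 1` with `E[g(R_l)] = P(1/(R_l S_l) > a_{nl} y) = O(1/n)`. Hölder's inequality with
exponents `1 + ε` and `q = (1 + ε)/ε`, together with `g^q ≤ g`, gives
`P(both) ≤ (m_k - 1)/c · ‖R_k⁻¹‖_{1+ε} · E[g(R_l)]^{1/q}`. The Beta tail of `S_k` forces
`a_{nk} ≥ n/4` eventually, so `c ≳ n` and `n · P(both) = O(E[g(R_l)]^{1/q}) → 0`.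
-/

open MeasureTheory ProbabilityTheory Filter
open scoped Topology ENNReal

section Conditioning

variable {Ω α β γ δ : Type*} [MeasurableSpace Ω] [MeasurableSpace α] [MeasurableSpace β]
  [MeasurableSpace γ] [MeasurableSpace δ] {μ : Measure Ω} [IsFiniteMeasure μ]

theorem measurable_measure_prodMk_mem {U : Ω → β} (hU : Measurable U) {E : Set (α × β)}
    (hE : MeasurableSet E) : Measurable fun t => μ {ω | (t, U ω) ∈ E} := by
  convert measurable_measure_prodMk_left (ν := μ.map U) hE using 2 with t
  rw [Measure.map_apply hU (measurable_prodMk_left hE)]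
  rfl

theorem ProbabilityTheory.IndepFun.measure_mem_eq_lintegral {T : Ω → α} {U : Ω → β}
    (hT : Measurable T) (hU : Measurable U) (h : IndepFun T U μ) {E : Set (α × β)}
    (hE : MeasurableSet E) :
    μ {ω | (T ω, U ω) ∈ E} = ∫⁻ ω, μ {ω' | (T ω, U ω') ∈ E} ∂μ := by
  have hmap := (indepFun_iff_map_prod_eq_prod_map_map hT.aemeasurable hU.aemeasurable).1 h
  calc μ {ω | (T ω, U ω) ∈ E} = μ.map (fun ω => (T ω, U ω)) E :=
        (Measure.map_apply (hT.prodMk hU) hE).symm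
    _ = ∫⁻ t, μ.map U (Prod.mk t ⁻¹' E) ∂(μ.map T) := by rw [hmap, Measure.prod_apply hE]
    _ = ∫⁻ t, μ {ω' | (t, U ω') ∈ E} ∂(μ.map T) := by
        simp only [Measure.map_apply hU (measurable_prodMk_left hE)]; rfl
    _ = ∫⁻ ω, μ {ω' | (T ω, U ω') ∈ E} ∂μ := lintegral_map (measurable_measure_prodMk_mem hU hE) hT

theorem ProbabilityTheory.IndepFun.measure_mem_and_mem_eq_lintegral_mul
    {T₁ : Ω → α} {T₂ : Ω → β} {U₁ : Ω → γ} {U₂ : Ω → δ} (hT₁ : Measurable T₁)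
    (hT₂ : Measurable T₂) (hU₁ : Measurable U₁) (hU₂ : Measurable U₂)
    (hTU : IndepFun (fun ω => (T₁ ω, T₂ ω)) (fun ω => (U₁ ω, U₂ ω)) μ) (hU : IndepFun U₁ U₂ μ)
    {E₁ : Set (α × γ)} {E₂ : Set (β × δ)} (hE₁ : MeasurableSet E₁) (hE₂ : MeasurableSet E₂) :
    μ {ω | (T₁ ω, U₁ ω) ∈ E₁ ∧ (T₂ ω, U₂ ω) ∈ E₂} =
      ∫⁻ ω, μ {ω' | (T₁ ω, U₁ ω') ∈ E₁} * μ {ω' | (T₂ ω, U₂ ω') ∈ E₂} ∂μ := by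
  have hE : MeasurableSet {p : (α × β) × (γ × δ) | (p.1.1, p.2.1) ∈ E₁ ∧ (p.1.2, p.2.2) ∈ E₂} :=
    (hE₁.preimage (by fun_prop)).inter (hE₂.preimage (by fun_prop))
  calc _ = ∫⁻ ω, μ {ω' | (T₁ ω, U₁ ω') ∈ E₁ ∧ (T₂ ω, U₂ ω') ∈ E₂} ∂μ :=
        hTU.measure_mem_eq_lintegral (hT₁.prodMk hT₂) (hU₁.prodMk hU₂) hE
    _ = _ := lintegral_congr fun ω => hU.measure_inter_preimage_eq_mul _ _
        (measurable_prodMk_left hE₁) (measurable_prodMk_left hE₂)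

end Conditioning

theorem ENNReal.lintegral_mul_le_Lp_mul_lintegral_of_le_one {α : Type*} [MeasurableSpace α]
    {μ : Measure α} {p q : ℝ} (hpq : p.HolderConjugate q) {f g : α → ℝ≥0∞}
    (hf : AEMeasurable f μ) (hg : AEMeasurable g μ) (hg1 : ∀ a, g a ≤ 1) :
    ∫⁻ a, f a * g a ∂μ ≤ (∫⁻ a, f a ^ p ∂μ) ^ (1 / p) * (∫⁻ a, g a ∂μ) ^ (1 / q) := by
  refine (ENNReal.lintegral_mul_le_Lp_mul_Lq μ hpq hf hg).trans ?_
  gcongr with a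
  · exact hpq.symm.one_div_nonneg
  calc g a ^ q ≤ g a ^ (1 : ℝ) := ENNReal.rpow_le_rpow_of_exponent_ge (hg1 a) hpq.symm.lt.le
    _ = g a := ENNReal.rpow_one _

theorem tendsto_zero_of_tendsto_natCast_mul {u : ℕ → ℝ} {L : ℝ}
    (h : Tendsto (fun n : ℕ => (n : ℝ) * u n) atTop (𝓝 L)) : Tendsto u atTop (𝓝 0) := by
  have := (tendsto_inv_atTop_nhds_zero_nat (𝕜 := ℝ)).mul h
  rw [zero_mul] at this
  refine this.congr' ((eventually_ne_atTop 0).mono fun n hn => ?_)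
  rw [← mul_assoc, inv_mul_cancel₀ (Nat.cast_ne_zero.2 hn), one_mul]

theorem MeasureTheory.Integrable.of_integrable_rpow {Ω : Type*} [MeasurableSpace Ω]
    {μ : Measure Ω} [IsFiniteMeasure μ] {f : Ω → ℝ} (hf : AEStronglyMeasurable f μ)
    (hf0 : 0 ≤ᵐ[μ] f) {p : ℝ} (hp : 1 ≤ p) (h : Integrable (fun ω => f ω ^ p) μ) :
    Integrable f μ := by
  refine ((integrable_const 1).add h).mono' hf (hf0.mono fun ω hω => ?_)
  rw [Real.norm_of_nonneg hω, Pi.add_apply]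
  rcases le_or_gt (f ω) 1 with h1 | h1
  · linarith [Real.rpow_nonneg hω p]
  · linarith [Real.self_le_rpow_of_one_le h1.le hp]

theorem integral_pos_of_ae_pos {Ω : Type*} [MeasurableSpace Ω] {μ : Measure Ω}
    [IsProbabilityMeasure μ] {f : Ω → ℝ} (hf : Integrable f μ) (hpos : ∀ᵐ ω ∂μ, 0 < f ω) :
    0 < ∫ ω, f ω ∂μ := by
  rw [integral_pos_iff_support_of_nonneg_ae (hpos.mono fun _ h => h.le) hf]
  refine pos_iff_ne_zero.2 fun h0 => ?_
  obtain ⟨ω, hω⟩ := ((measure_eq_zero_iff_ae_notMem.1 h0).and hpos).exists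
  exact hω.1 hω.2.ne'

def HasBetaOneTail {Ω : Type*} [MeasurableSpace Ω] (μ : Measure Ω) (m : ℕ) (S : Ω → ℝ) :
    Prop :=
  ∀ s : ℝ, 0 ≤ s → s ≤ 1 → (μ {ω | s < S ω}).toReal = (1 - s) ^ (m - 1)

namespace HasBetaOneTail

variable {Ω : Type*} [MeasurableSpace Ω] {μ : Measure Ω} [IsProbabilityMeasure μ] {m : ℕ}
  {S : Ω → ℝ}

theorem toReal_measure_le (hS : HasBetaOneTail μ m S) (hSm : Measurable S) {u : ℝ}
    (hu0 : 0 ≤ u) (hu1 : u ≤ 1) :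
    (μ {ω | S ω ≤ u}).toReal = 1 - (1 - u) ^ (m - 1) := by
  have hcompl : {ω | S ω ≤ u} = {ω | u < S ω}ᶜ := by ext; simp
  rw [hcompl, prob_compl_eq_one_sub (measurableSet_lt measurable_const hSm),
    ENNReal.toReal_sub_of_le prob_le_one ENNReal.one_ne_top, hS u hu0 hu1, ENNReal.toReal_one]

theorem measure_one_div_gt_le (hS : HasBetaOneTail μ m S) (hSm : Measurable S) (hm : 2 ≤ m)
    {a : ℝ} (ha : 0 < a) :
    μ {ω | a < 1 / S ω} ≤ ENNReal.ofReal ((m - 1) / a) := by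
  have hm1 : (1 : ℝ) ≤ m - 1 := by linarith [show (2 : ℝ) ≤ m by exact_mod_cast hm]
  rcases le_or_gt 1 ((m - 1) / a) with hbig | hsmall
  · exact prob_le_one.trans (ENNReal.one_le_ofReal.2 hbig)
  have ha1 : 1 < a := by rw [div_lt_one ha] at hsmall; linarith
  have hsub : {ω | a < 1 / S ω} ⊆ {ω | S ω ≤ 1 / a} := by
    intro ω hω
    have hSpos : 0 < S ω := one_div_pos.1 (ha.trans hω)
    exact (lt_one_div ha hSpos |>.1 hω).le
  have hinv : 0 < 1 / a ∧ 1 / a ≤ 1 := ⟨by positivity, (div_le_one ha).2 ha1.le⟩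
  have hbern : 1 - ((m : ℝ) - 1) / a ≤ (1 - 1 / a) ^ (m - 1) := by
    have := one_add_mul_le_pow (a := -(1 / a)) (by linarith) (m - 1)
    rwa [Nat.cast_sub (by omega), Nat.cast_one, mul_neg, mul_one_div, ← sub_eq_add_neg,
      ← sub_eq_add_neg] at this
  refine (measure_mono hsub).trans ((ENNReal.le_ofReal_iff_toReal_le (measure_ne_top _ _)
    (by positivity)).2 ?_)
  rw [hS.toReal_measure_le hSm hinv.1.le hinv.2]
  linarith

theorem min_le_toReal_measure_one_div_gt (hS : HasBetaOneTail μ m S) (hSm : Measurable S)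
    (hm : 2 ≤ m) {a : ℝ} (ha : 0 < a) :
    min 1 (1 / (2 * a)) ≤ (μ {ω | a < 1 / S ω}).toReal := by
  set u := min 1 (1 / (2 * a))
  have hu0 : 0 < u := lt_min one_pos (by positivity)
  have hu1 : u ≤ 1 := min_le_left _ _
  have hnull : μ {ω | S ω ≤ 0} = 0 := by
    have := hS.toReal_measure_le hSm le_rfl zero_le_one
    rw [sub_zero, one_pow, sub_self, ENNReal.toReal_eq_zero_iff] at this
    exact this.resolve_right (measure_ne_top _ _)
  have hsub : {ω | S ω ≤ u} \ {ω | S ω ≤ 0} ⊆ {ω | a < 1 / S ω} := by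
    rintro ω ⟨hle, hnonpos⟩
    have hpos : 0 < S ω := lt_of_not_ge hnonpos
    have : S ω ≤ 1 / (2 * a) := hle.trans (min_le_right _ _)
    rw [Set.mem_ofPred_eq, lt_one_div ha hpos]
    exact this.trans_lt (one_div_lt_one_div_of_lt ha (by linarith))
  have hpow : (1 - u) ^ (m - 1) ≤ 1 - u :=
    pow_le_of_le_one (by linarith) (by linarith) (by omega)
  calc u ≤ (μ {ω | S ω ≤ u}).toReal := by rw [hS.toReal_measure_le hSm hu0.le hu1]; linarith
    _ = (μ ({ω | S ω ≤ u} \ {ω | S ω ≤ 0})).toReal := by rw [measure_sdiff_null hnull]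
    _ ≤ (μ {ω | a < 1 / S ω}).toReal := ENNReal.toReal_mono (measure_ne_top _ _) (measure_mono hsub)

theorem eventually_div_four_le (hS : HasBetaOneTail μ m S) (hSm : Measurable S) (hm : 2 ≤ m)
    {a : ℕ → ℝ} (ha : ∀ n, 0 < a n)
    (h : Tendsto (fun n : ℕ => (n : ℝ) * (μ {ω | a n < 1 / S ω}).toReal) atTop (𝓝 1)) :
    ∀ᶠ n : ℕ in atTop, (n : ℝ) / 4 ≤ a n := by
  filter_upwards [h.eventually_lt_const one_lt_two, eventually_ge_atTop 2] with n hlt hn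
  have hn : (2 : ℝ) ≤ n := by exact_mod_cast hn
  have hlow := mul_le_mul_of_nonneg_left (hS.min_le_toReal_measure_one_div_gt hSm hm (ha n))
    (Nat.cast_nonneg n)
  rcases min_cases 1 (1 / (2 * a n)) with ⟨hmin, -⟩ | ⟨hmin, -⟩ <;> rw [hmin] at hlow
  · linarith
  · rw [mul_one_div, div_le_iff₀ (by linarith [ha n])] at hlow
    nlinarith [ha n]

theorem measure_lt_one_div_mul_le (hS : HasBetaOneTail μ m S) (hSm : Measurable S)
    (hm : 2 ≤ m) {c r : ℝ} (hc : 0 < c) (hr : 0 < r) :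
    μ {ω | c < 1 / (r * S ω)} ≤ ENNReal.ofReal ((m - 1) / c) * ENNReal.ofReal (1 / r) := by
  have hset : {ω | c < 1 / (r * S ω)} = {ω | c * r < 1 / S ω} := by
    ext ω
    rw [Set.mem_ofPred_eq, Set.mem_ofPred_eq, mul_comm r, ← div_div, lt_div_iff₀ hr]
  rw [hset, ← ENNReal.ofReal_mul (div_nonneg (by norm_num; omega) hc.le), div_mul_div_comm, mul_one]
  exact hS.measure_one_div_gt_le hSm hm (mul_pos hc hr)

end HasBetaOneTail

section JointTail

variable {Ω : Type*} [MeasurableSpace Ω] {μ : Measure Ω} [IsProbabilityMeasure μ]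

variable {mk : ℕ} {Rk Rl Sk Sl : Ω → ℝ} {p q : ℝ}

theorem measure_joint_tail_le (hSk : HasBetaOneTail μ mk Sk) (hmk : 2 ≤ mk)
    (hRkm : Measurable Rk) (hRlm : Measurable Rl) (hSkm : Measurable Sk) (hSlm : Measurable Sl)
    (hRS : IndepFun (fun ω => (Rk ω, Rl ω)) (fun ω => (Sk ω, Sl ω)) μ) (hS : IndepFun Sk Sl μ)
    (hRk : ∀ᵐ ω ∂μ, 0 < Rk ω) (hpq : p.HolderConjugate q) {c : ℝ} (hc : 0 < c) (d : ℝ) :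
    μ {ω | c < 1 / (Rk ω * Sk ω) ∧ d < 1 / (Rl ω * Sl ω)} ≤
      ENNReal.ofReal ((mk - 1) / c) * (∫⁻ ω, ENNReal.ofReal (1 / Rk ω) ^ p ∂μ) ^ (1 / p) *
        μ {ω | d < 1 / (Rl ω * Sl ω)} ^ (1 / q) := by
  have hE (a : ℝ) : MeasurableSet {x : ℝ × ℝ | a < 1 / (x.1 * x.2)} :=
    measurableSet_lt measurable_const (by fun_prop)
  set gl : Ω → ℝ≥0∞ := fun ω => μ {ω' | d < 1 / (Rl ω * Sl ω')}
  have hgl : Measurable gl := (measurable_measure_prodMk_mem hSlm (hE d)).comp hRlm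
  calc _ = ∫⁻ ω, μ {ω' | c < 1 / (Rk ω * Sk ω')} * gl ω ∂μ :=
        hRS.measure_mem_and_mem_eq_lintegral_mul hRkm hRlm hSkm hSlm hS (hE c) (hE d)
    _ ≤ ∫⁻ ω, ENNReal.ofReal ((mk - 1) / c) * (ENNReal.ofReal (1 / Rk ω) * gl ω) ∂μ := by
        refine lintegral_mono_ae (hRk.mono fun ω hω => ?_)
        rw [← mul_assoc]
        exact mul_le_mul_left (hSk.measure_lt_one_div_mul_le hSkm hmk hc hω) _
    _ = ENNReal.ofReal ((mk - 1) / c) * ∫⁻ ω, ENNReal.ofReal (1 / Rk ω) * gl ω ∂μ :=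
        lintegral_const_mul' _ _ ENNReal.ofReal_ne_top
    _ ≤ ENNReal.ofReal ((mk - 1) / c) *
          ((∫⁻ ω, ENNReal.ofReal (1 / Rk ω) ^ p ∂μ) ^ (1 / p) * (∫⁻ ω, gl ω ∂μ) ^ (1 / q)) := by
        gcongr
        exact ENNReal.lintegral_mul_le_Lp_mul_lintegral_of_le_one hpq (by fun_prop)
          hgl.aemeasurable fun _ => prob_le_one
    _ = _ := by
        rw [← mul_assoc]
        congr 2
        exact ((hRS.comp measurable_snd measurable_snd).measure_mem_eq_lintegral hRlm hSlm
          (hE d)).symm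

theorem toReal_measure_joint_tail_le (hSk : HasBetaOneTail μ mk Sk) (hmk : 2 ≤ mk)
    (hRkm : Measurable Rk) (hRlm : Measurable Rl) (hSkm : Measurable Sk) (hSlm : Measurable Sl)
    (hRS : IndepFun (fun ω => (Rk ω, Rl ω)) (fun ω => (Sk ω, Sl ω)) μ) (hS : IndepFun Sk Sl μ)
    (hRk : ∀ᵐ ω ∂μ, 0 < Rk ω) (hpq : p.HolderConjugate q)
    (hmom : Integrable (fun ω => (1 / Rk ω) ^ p) μ) {c : ℝ} (hc : 0 < c) (d : ℝ) :
    (μ {ω | c < 1 / (Rk ω * Sk ω) ∧ d < 1 / (Rl ω * Sl ω)}).toReal ≤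
      (mk - 1) / c * (∫ ω, (1 / Rk ω) ^ p ∂μ) ^ (1 / p) *
        (μ {ω | d < 1 / (Rl ω * Sl ω)}).toReal ^ (1 / q) := by
  have hm1 : (0 : ℝ) ≤ mk - 1 := by norm_num; omega
  have hmom0 : 0 ≤ᵐ[μ] fun ω => (1 / Rk ω) ^ p := hRk.mono fun ω hω => by positivity
  have hlin : ∫⁻ ω, ENNReal.ofReal (1 / Rk ω) ^ p ∂μ = ENNReal.ofReal (∫ ω, (1 / Rk ω) ^ p ∂μ) := by
    rw [ofReal_integral_eq_lintegral_ofReal hmom hmom0]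
    exact lintegral_congr_ae (hRk.mono fun ω hω =>
      ENNReal.ofReal_rpow_of_nonneg (by positivity) hpq.nonneg)
  have hI0 : 0 ≤ ∫ ω, (1 / Rk ω) ^ p ∂μ := integral_nonneg_of_ae hmom0
  refine ENNReal.toReal_le_of_le_ofReal (by positivity)
    ((measure_joint_tail_le hSk hmk hRkm hRlm hSkm hSlm hRS hS hRk hpq hc d).trans_eq ?_)
  rw [ENNReal.ofReal_mul (by positivity), ENNReal.ofReal_mul (by positivity),
    ← ENNReal.ofReal_rpow_of_nonneg hI0 hpq.one_div_nonneg,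
    ← ENNReal.ofReal_rpow_of_nonneg ENNReal.toReal_nonneg hpq.symm.one_div_nonneg,
    ENNReal.ofReal_toReal (measure_ne_top _ _), hlin]

theorem tendsto_natCast_mul_measure_joint_tail (hSk : HasBetaOneTail μ mk Sk) (hmk : 2 ≤ mk)
    (hRkm : Measurable Rk) (hRlm : Measurable Rl) (hSkm : Measurable Sk) (hSlm : Measurable Sl)
    (hRS : IndepFun (fun ω => (Rk ω, Rl ω)) (fun ω => (Sk ω, Sl ω)) μ) (hS : IndepFun Sk Sl μ)
    (hRk : ∀ᵐ ω ∂μ, 0 < Rk ω) (hpq : p.HolderConjugate q)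
    (hmom : Integrable (fun ω => (1 / Rk ω) ^ p) μ) {c d : ℕ → ℝ} {κ : ℝ} (hκ : 0 < κ)
    (hc : ∀ᶠ n in atTop, κ * n ≤ c n)
    (hd : Tendsto (fun n => (μ {ω | d n < 1 / (Rl ω * Sl ω)}).toReal) atTop (𝓝 0)) :
    Tendsto (fun n : ℕ => (n : ℝ) *
      (μ {ω | c n < 1 / (Rk ω * Sk ω) ∧ d n < 1 / (Rl ω * Sl ω)}).toReal) atTop (𝓝 0) := by
  set K := (mk - 1 : ℝ) * (∫ ω, (1 / Rk ω) ^ p ∂μ) ^ (1 / p)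
  set P := fun n => (μ {ω | d n < 1 / (Rl ω * Sl ω)}).toReal
  have hK : 0 ≤ K := mul_nonneg (by norm_num; omega)
    (Real.rpow_nonneg (integral_nonneg_of_ae (hRk.mono fun _ h => by positivity)) _)
  have hbound : ∀ᶠ n : ℕ in atTop, (n : ℝ) *
      (μ {ω | c n < 1 / (Rk ω * Sk ω) ∧ d n < 1 / (Rl ω * Sl ω)}).toReal ≤
        1 / κ * K * P n ^ (1 / q) := by
    filter_upwards [hc, eventually_gt_atTop 0] with n hn hn0
    have hcn : 0 < c n := lt_of_lt_of_le (by positivity) hn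
    have hnc : (n : ℝ) / c n ≤ 1 / κ := by rwa [div_le_div_iff₀ hcn hκ, one_mul, mul_comm]
    calc _ ≤ (n : ℝ) * ((mk - 1) / c n * (∫ ω, (1 / Rk ω) ^ p ∂μ) ^ (1 / p) * P n ^ (1 / q)) :=
          mul_le_mul_of_nonneg_left (toReal_measure_joint_tail_le hSk hmk hRkm hRlm hSkm hSlm
            hRS hS hRk hpq hmom hcn (d n)) n.cast_nonneg
      _ = (n : ℝ) / c n * (K * P n ^ (1 / q)) := by ring
      _ ≤ 1 / κ * (K * P n ^ (1 / q)) :=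
          mul_le_mul_of_nonneg_right hnc (mul_nonneg hK (by positivity))
      _ = _ := by ring
  have hlim := (hd.rpow_const (Or.inr hpq.symm.one_div_nonneg)).const_mul (1 / κ * K)
  rw [Real.zero_rpow hpq.symm.one_div_ne_zero, mul_zero] at hlim
  exact squeeze_zero' (.of_forall fun n => by positivity) hbound hlim

end JointTail

theorem stmt_8_general
    {Ω : Type*} [MeasurableSpace Ω] (μ : Measure Ω) [IsProbabilityMeasure μ]
    (mk : ℕ) (hmk : 2 ≤ mk)
    (Sk Sl : Ω → ℝ) (hSkmeas : Measurable Sk) (hSlmeas : Measurable Sl)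
    (hSk : ∀ s : ℝ, 0 ≤ s → s ≤ 1 → (μ {ω | s < Sk ω}).toReal = (1 - s) ^ (mk - 1))
    (hSindep : IndepFun Sk Sl μ)
    (Rk Rl : Ω → ℝ) (hRkmeas : Measurable Rk) (hRlmeas : Measurable Rl)
    (hRkpos : ∀ᵐ ω ∂μ, 0 < Rk ω)
    (hRSindep : IndepFun (fun ω => (Rk ω, Rl ω)) (fun ω => (Sk ω, Sl ω)) μ)
    -- (i) light-tailed cluster k
    (ε : ℝ) (hε : 0 < ε)
    (hmom : Integrable (fun ω => (1 / Rk ω) ^ (1 + ε)) μ)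
    (ank : ℕ → ℝ) (hank : ∀ n, 0 < ank n)
    (haSk : ∀ x : ℝ, 0 < x →
      Tendsto (fun n : ℕ => (n : ℝ) * (μ {ω | ank n * x < 1 / Sk ω}).toReal)
        atTop (𝓝 (1 / x)))
    (bk : ℝ) (hbk : bk = ∫ ω, 1 / Rk ω ∂μ)
    -- (ii) boundary-case cluster l
    (anl : ℕ → ℝ)
    (haRSl : ∀ x : ℝ, 0 < x →
      Tendsto
        (fun n : ℕ => (n : ℝ) * (μ {ω | anl n * x < 1 / (Rl ω * Sl ω)}).toReal)
        atTop (𝓝 (1 / x))) :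
    ∀ x y : ℝ, 0 < x → 0 < y →
      Tendsto
        (fun n : ℕ =>
          (n : ℝ) * (μ {ω | ank n * bk * x < 1 / (Rk ω * Sk ω) ∧
            anl n * y < 1 / (Rl ω * Sl ω)}).toReal)
        atTop (𝓝 0) := by
  intro x y hx hy
  have hbk0 : 0 < bk := hbk ▸ integral_pos_of_ae_pos
    (.of_integrable_rpow (measurable_const.div hRkmeas).aestronglyMeasurable
      (hRkpos.mono fun _ h => by positivity) (by linarith) hmom)
    (hRkpos.mono fun _ h => by positivity)
  have hscale := HasBetaOneTail.eventually_div_four_le hSk hSkmeas hmk hank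
    (by simpa using haSk 1 one_pos)
  refine tendsto_natCast_mul_measure_joint_tail hSk hmk hRkmeas hRlmeas hSkmeas hSlmeas
    hRSindep hSindep hRkpos (.conjExponent (lt_add_of_pos_right 1 hε)) hmom
    (κ := bk * x / 4) (by positivity) (hscale.mono fun n hn => ?_)
    (tendsto_zero_of_tendsto_natCast_mul (haRSl y hy))
  calc bk * x / 4 * n = n / 4 * (bk * x) := by ring
    _ ≤ ank n * (bk * x) := by gcongr
    _ = ank n * bk * x := by ring

/-- (Asymptotic independence between a light-tailed cluster and a
boundary-case cluster.) -/
theorem stmt_8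
    {Ω : Type*} [MeasurableSpace Ω] (μ : Measure Ω) [IsProbabilityMeasure μ]
    (mk ml : ℕ) (hmk : 2 ≤ mk) (hml : 2 ≤ ml)
    (Sk Sl : Ω → ℝ) (hSkmeas : Measurable Sk) (hSlmeas : Measurable Sl)
    (hSk : ∀ s : ℝ, 0 ≤ s → s ≤ 1 → (μ {ω | s < Sk ω}).toReal = (1 - s) ^ (mk - 1))
    (hSl : ∀ s : ℝ, 0 ≤ s → s ≤ 1 → (μ {ω | s < Sl ω}).toReal = (1 - s) ^ (ml - 1))
    (hSindep : IndepFun Sk Sl μ)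
    (Rk Rl : Ω → ℝ) (hRkmeas : Measurable Rk) (hRlmeas : Measurable Rl)
    (hRkpos : ∀ᵐ ω ∂μ, 0 < Rk ω) (hRlpos : ∀ᵐ ω ∂μ, 0 < Rl ω)
    (hRSindep : IndepFun (fun ω => (Rk ω, Rl ω)) (fun ω => (Sk ω, Sl ω)) μ)
    -- (i) light-tailed cluster k
    (ε : ℝ) (hε : 0 < ε)
    (hmom : Integrable (fun ω => (1 / Rk ω) ^ (1 + ε)) μ)
    (ank : ℕ → ℝ) (hank : ∀ n, 0 < ank n)
    (haSk : ∀ x : ℝ, 0 < x →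
      Tendsto (fun n : ℕ => (n : ℝ) * (μ {ω | ank n * x < 1 / Sk ω}).toReal)
        atTop (𝓝 (1 / x)))
    (bk : ℝ) (hbk : bk = ∫ ω, 1 / Rk ω ∂μ)
    -- (ii) boundary-case cluster l
    (anl : ℕ → ℝ) (hanl : ∀ n, 0 < anl n)
    (haRSl : ∀ x : ℝ, 0 < x →
      Tendsto
        (fun n : ℕ => (n : ℝ) * (μ {ω | anl n * x < 1 / (Rl ω * Sl ω)}).toReal)
        atTop (𝓝 (1 / x))) :
    ∀ x y : ℝ, 0 < x → 0 < y →
      Tendsto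
        (fun n : ℕ =>
          (n : ℝ) * (μ {ω | ank n * bk * x < 1 / (Rk ω * Sk ω) ∧
            anl n * y < 1 / (Rl ω * Sl ω)}).toReal)
        atTop (𝓝 0) :=
  stmt_8_general μ mk hmk Sk Sl hSkmeas hSlmeas hSk hSindep Rk Rl hRkmeas hRlmeas hRkpos hRSindep ε
    hε hmom ank hank haSk bk hbk anl haRSl
end

section
/- (Marginal stdf identity for a single cluster.) Let d ≥ 2, let ℓ be a d-variate stable tail dependence function in d-norm form, and let S = (S_1,…,S_d) have the ℓ-simplex distribution. Let ρ ∈ (0,1) and b = E[Z^{−ρ}] where Z is Beta(1, d−1), i.e. P(Z > s) = (1−s)^{d−1} on [0,1]. Then for every x = (x_1,…,x_d) ∈ [0,∞)^d, E[max_{1≤i≤d} x_i / (b S_i^{ρ})] = (ℓ(x_1^{1/ρ},…,x_d^{1/ρ}))^{ρ}. -/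
open MeasureTheory ProbabilityTheory Filter
open scoped Topology

/-- A `d`-variate stable tail dependence function in d-norm form:
`ℓ x = E[max_i x i * W i]` for some integrable, a.s. positive random variables `W i`,
each with unit mean. -/
def IsDNormStdf {d : ℕ} (ℓ : (Fin d → ℝ) → ℝ) : Prop :=
  ∃ (Ω' : Type) (_ : MeasurableSpace Ω') (μ' : Measure Ω') (W : Fin d → Ω' → ℝ),
    IsProbabilityMeasure μ' ∧
    (∀ i, Measurable (W i)) ∧
    (∀ i, Integrable (W i) μ') ∧
    (∀ i, ∀ᵐ ω ∂μ', 0 < W i ω) ∧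
    (∀ i, ∫ ω, W i ω ∂μ' = 1) ∧
    ∀ x : Fin d → ℝ, ℓ x = ∫ ω, (⨆ i, x i * W i ω) ∂μ'

/-! With `y = x ^ (1 / ρ)` and `M = max_i y i / S i`, the integrand equals `M ^ ρ / b`.
Positive homogeneity of `ℓ` turns the simplex survival function into
`P(M < u) = P(S > y / u) = (1 - ℓ y / u)₊ ^ (d - 1)`, so `Z = ℓ y / M` has survival function
`(1 - s) ^ (d - 1)` on `[0, 1]`, i.e. `Z` is Beta(1, d - 1) distributed. Hence
`E[M ^ ρ] = (ℓ y) ^ ρ * E[Z ^ (-ρ)] = (ℓ y) ^ ρ * b`. -/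

open Set

section Finite

variable {ι : Type*} [Finite ι] [Nonempty ι]

lemma ciSup_lt_iff_of_finite {f : ι → ℝ} {a : ℝ} : ⨆ i, f i < a ↔ ∀ i, f i < a := by
  refine ⟨fun h i => (le_ciSup (finite_range f).bddAbove i).trans_lt h, fun h => ?_⟩
  obtain ⟨k, hk⟩ := exists_eq_ciSup_of_finite (f := f)
  exact hk ▸ h k

lemma Real.iSup_rpow {f : ι → ℝ} (hf : ∀ i, 0 ≤ f i) {ρ : ℝ} (hρ : 0 ≤ ρ) :
    (⨆ i, f i) ^ ρ = ⨆ i, f i ^ ρ := by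
  obtain ⟨k, hk⟩ := exists_eq_ciSup_of_finite (f := f)
  refine le_antisymm ?_ (ciSup_le fun i => ?_)
  · rw [← hk]
    exact le_ciSup (finite_range fun i => f i ^ ρ).bddAbove k
  · exact Real.rpow_le_rpow (hf i) (le_ciSup (finite_range f).bddAbove i) hρ

lemma MeasureTheory.Integrable.iSup {Ω : Type*} [MeasurableSpace Ω] {μ : Measure Ω}
    {f : ι → Ω → ℝ} (hf : ∀ i, Integrable (f i) μ) : Integrable (fun ω => ⨆ i, f i ω) μ := by
  have := Fintype.ofFinite ι
  refine (integrable_finsetSum Finset.univ fun i _ => (hf i).norm).mono'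
    (AEMeasurable.iSup fun i => (hf i).aemeasurable).aestronglyMeasurable
    (ae_of_all _ fun ω => ?_)
  obtain ⟨k, hk⟩ := exists_eq_ciSup_of_finite (f := fun i => f i ω)
  rw [← hk]
  exact Finset.single_le_sum (f := fun i => ‖f i ω‖) (fun i _ => norm_nonneg _)
    (Finset.mem_univ k)

lemma iSup_div_mul_rpow {x s : ι → ℝ} (hx : ∀ i, 0 ≤ x i) (hs : ∀ i, 0 < s i) {b ρ : ℝ}
    (hb : 0 ≤ b) (hρ : 0 < ρ) :
    ⨆ i, x i / (b * s i ^ ρ) = b⁻¹ * (⨆ i, x i ^ (1 / ρ) / s i) ^ ρ := by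
  have hterm : ∀ i, x i / (b * s i ^ ρ) = b⁻¹ * (x i ^ (1 / ρ) / s i) ^ ρ := fun i => by
    rw [Real.div_rpow (Real.rpow_nonneg (hx i) _) (hs i).le, ← Real.rpow_mul (hx i),
      one_div_mul_cancel hρ.ne', Real.rpow_one]
    ring
  simp only [hterm]
  rw [← Real.mul_iSup_of_nonneg (inv_nonneg.2 hb),
    ← Real.iSup_rpow (fun i => div_nonneg (Real.rpow_nonneg (hx i) _) (hs i).le) hρ.le]

end Finite

lemma Real.rpow_mul_div_rpow_neg {a c : ℝ} (ha : 0 ≤ a) (hc : 0 < c) (ρ : ℝ) :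
    c ^ ρ * (c / a) ^ (-ρ) = a ^ ρ := by
  rw [Real.rpow_neg (div_nonneg hc.le ha), ← Real.inv_rpow (div_nonneg hc.le ha), inv_div,
    Real.div_rpow ha hc.le]
  field_simp

namespace IsDNormStdf

variable {d : ℕ} {ℓ : (Fin d → ℝ) → ℝ}

lemma apply_smul (hℓ : IsDNormStdf ℓ) {u : ℝ} (hu : 0 ≤ u) (z : Fin d → ℝ) :
    ℓ (u • z) = u * ℓ z := by
  obtain ⟨Ω, _, μ, W, -, -, -, -, -, hℓ⟩ := hℓ
  simp only [hℓ, Pi.smul_apply, smul_eq_mul, mul_assoc, ← Real.mul_iSup_of_nonneg hu,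
    integral_const_mul]

lemma apply_zero (hℓ : IsDNormStdf ℓ) : ℓ 0 = 0 := by
  simpa using hℓ.apply_smul le_rfl 0

lemma le_apply (hℓ : IsDNormStdf ℓ) (z : Fin d → ℝ) (j : Fin d) : z j ≤ ℓ z := by
  obtain ⟨Ω, _, μ, W, -, -, hWint, -, hWmean, hℓ⟩ := hℓ
  have : Nonempty (Fin d) := ⟨j⟩
  calc z j = ∫ ω, z j * W j ω ∂μ := by rw [integral_const_mul, hWmean, mul_one]
    _ ≤ ∫ ω, ⨆ i, z i * W i ω ∂μ :=
      integral_mono ((hWint j).const_mul _) (Integrable.iSup fun i => (hWint i).const_mul _)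
        fun ω => le_ciSup (finite_range fun i => z i * W i ω).bddAbove j
    _ = ℓ z := (hℓ z).symm

end IsDNormStdf

section Beta

/-- Beta(1, m + 1), indexed by `m` so that no natural subtraction appears in the density. -/
noncomputable def betaOneMeasure (m : ℕ) : Measure ℝ :=
  (volume.restrict (Ioo 0 1)).withDensity fun s => ENNReal.ofReal ((m + 1) * (1 - s) ^ m)

variable {m : ℕ}

lemma betaOneMeasure_apply {t : Set ℝ} (ht : MeasurableSet t) :
    betaOneMeasure m t = ∫⁻ s in t ∩ Ioo 0 1, ENNReal.ofReal ((m + 1) * (1 - s) ^ m) := by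
  rw [betaOneMeasure, withDensity_apply _ ht, Measure.restrict_restrict ht]

lemma setLIntegral_Ioo_betaOne {a : ℝ} (ha : a ≤ 1) :
    ∫⁻ s in Ioo a 1, ENNReal.ofReal ((m + 1) * (1 - s) ^ m) =
      ENNReal.ofReal ((1 - a) ^ (m + 1)) := by
  rw [← ofReal_integral_eq_lintegral_ofReal]
  · rw [← integral_Ioc_eq_integral_Ioo, ← intervalIntegral.integral_of_le ha,
      intervalIntegral.integral_const_mul,
      intervalIntegral.integral_comp_sub_left (fun u => u ^ m) 1, integral_pow]
    congr 1
    field_simp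
    ring
  · exact (Continuous.continuousOn (by fun_prop)).integrableOn_Icc.mono_set Ioo_subset_Icc_self
  · filter_upwards [ae_restrict_mem measurableSet_Ioo] with s hs
    have : 0 ≤ 1 - s := sub_nonneg.2 hs.2.le
    positivity

instance : IsProbabilityMeasure (betaOneMeasure m) :=
  ⟨by rw [betaOneMeasure_apply MeasurableSet.univ, univ_inter, setLIntegral_Ioo_betaOne zero_le_one]
      simp⟩

lemma betaOneMeasure_Ioi {s : ℝ} (hs : s ∈ Icc (0 : ℝ) 1) :
    betaOneMeasure m (Ioi s) = ENNReal.ofReal ((1 - s) ^ (m + 1)) := by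
  rw [betaOneMeasure_apply measurableSet_Ioi, Ioi_inter_Ioo, max_eq_left hs.1,
    setLIntegral_Ioo_betaOne hs.2]

lemma ae_betaOneMeasure_mem_Ioo : ∀ᵐ s ∂betaOneMeasure m, s ∈ Ioo (0 : ℝ) 1 :=
  (withDensity_absolutelyContinuous _ _).ae_le (ae_restrict_mem measurableSet_Ioo)

lemma integral_betaOneMeasure (f : ℝ → ℝ) :
    ∫ s, f s ∂betaOneMeasure m = ∫ s in Ioo 0 1, (m + 1) * (1 - s) ^ m * f s := by
  rw [betaOneMeasure, integral_withDensity_eq_integral_toReal_smul (by fun_prop)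
    (ae_of_all _ fun _ => ENNReal.ofReal_lt_top)]
  refine setIntegral_congr_fun measurableSet_Ioo fun s hs => ?_
  have : 0 ≤ 1 - s := sub_nonneg.2 hs.2.le
  rw [ENNReal.toReal_ofReal (by positivity), smul_eq_mul]

lemma measure_Ioi_eq_of_ae_mem_Ioc {ν : Measure ℝ} (h : ∀ᵐ z ∂ν, z ∈ Ioc (0 : ℝ) 1) (a : ℝ) :
    ν (Ioi a) = ν (Ioi (max 0 (min a 1))) := by
  refine measure_congr (eventuallyEq_set.mpr ?_)
  filter_upwards [h] with z ⟨hz0, hz1⟩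
  simp only [mem_Ioi, max_lt_iff, min_lt_iff]
  refine ⟨fun h => ⟨hz0, Or.inl h⟩, ?_⟩
  rintro ⟨-, h | h⟩
  · exact h
  · linarith

lemma eq_betaOneMeasure_of_measure_Ioi {ν : Measure ℝ} [IsProbabilityMeasure ν]
    (h : ∀ s ∈ Icc (0 : ℝ) 1, ν (Ioi s) = ENNReal.ofReal ((1 - s) ^ (m + 1))) :
    ν = betaOneMeasure m := by
  have h0 := h 0 ⟨le_rfl, zero_le_one⟩
  have h1 := h 1 ⟨zero_le_one, le_rfl⟩
  norm_num at h0 h1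
  have hsupp : ∀ᵐ z ∂ν, z ∈ Ioc (0 : ℝ) 1 := by
    have hpos : ∀ᵐ z ∂ν, z ∈ Ioi (0 : ℝ) := by
      rw [ae_mem_iff_measure_eq measurableSet_Ioi.nullMeasurableSet, h0, measure_univ]
    have hle : ∀ᵐ z ∂ν, z ∉ Ioi (1 : ℝ) := measure_eq_zero_iff_ae_notMem.mp h1
    filter_upwards [hpos, hle] with z hz0 hz1
    exact ⟨hz0, not_lt.mp hz1⟩
  have hclamp : ∀ a : ℝ, max 0 (min a 1) ∈ Icc (0 : ℝ) 1 := fun a =>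
    ⟨le_max_left _ _, max_le zero_le_one (min_le_right _ _)⟩
  refine Measure.ext_of_Iic _ _ fun a => ?_
  rw [← compl_Ioi, prob_compl_eq_one_sub measurableSet_Ioi, prob_compl_eq_one_sub measurableSet_Ioi,
    measure_Ioi_eq_of_ae_mem_Ioc hsupp,
    measure_Ioi_eq_of_ae_mem_Ioc
      (ae_betaOneMeasure_mem_Ioo.mono fun _ hs => Ioo_subset_Ioc_self hs),
    h _ (hclamp a), betaOneMeasure_Ioi (hclamp a)]

lemma integral_betaOneMeasure_sub_two {d : ℕ} (hd : 2 ≤ d) (f : ℝ → ℝ) :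
    ∫ s, f s ∂betaOneMeasure (d - 2) = ∫ s in Ioo 0 1, ((d : ℝ) - 1) * (1 - s) ^ (d - 2) * f s := by
  rw [integral_betaOneMeasure, show ((d - 2 : ℕ) : ℝ) + 1 = d - 1 by rw [Nat.cast_sub hd]; ring]

lemma integral_rpow_neg_betaOneMeasure_pos (m : ℕ) {ρ : ℝ} (hρ : ρ < 1) :
    0 < ∫ s, s ^ (-ρ) ∂betaOneMeasure m := by
  rw [integral_betaOneMeasure]
  have hrpow : IntegrableOn (fun s : ℝ => s ^ (-ρ)) (Ioo 0 1) := by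
    have := intervalIntegral.intervalIntegrable_rpow' (a := 0) (b := 1) (by linarith : (-1:ℝ) < -ρ)
    rwa [intervalIntegrable_iff_integrableOn_Ioo_of_le zero_le_one] at this
  have hpos : ∀ s ∈ Ioo (0 : ℝ) 1, 0 < (m + 1) * (1 - s) ^ m * s ^ (-ρ) := fun s hs => by
    have : 0 < 1 - s := sub_pos.2 hs.2
    have : 0 < s ^ (-ρ) := Real.rpow_pos_of_pos hs.1 _
    positivity
  rw [setIntegral_pos_iff_support_of_nonneg_ae
    ((ae_restrict_mem measurableSet_Ioo).mono fun s hs => (hpos s hs).le)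
    (hrpow.continuousOn_mul_of_subset (Continuous.continuousOn (by fun_prop)) isCompact_Icc
      measurableSet_Ioo Ioo_subset_Icc_self)]
  rw [inter_eq_right.mpr fun s hs => Function.mem_support.mpr (hpos s hs).ne', Real.volume_Ioo]
  norm_num

end Beta

section Simplex

variable {Ω : Type*} [MeasurableSpace Ω] {d : ℕ}

def HasSimplexDistribution (μ : Measure Ω) (ℓ : (Fin d → ℝ) → ℝ) (S : Fin d → Ω → ℝ) : Prop :=
  ∀ s : Fin d → ℝ, (∀ i, 0 ≤ s i) →
    (μ {ω | ∀ i, s i < S i ω}).toReal = max 0 (1 - ℓ s) ^ (d - 1)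

namespace HasSimplexDistribution

variable {μ : Measure Ω} [IsProbabilityMeasure μ] {ℓ : (Fin d → ℝ) → ℝ} {S : Fin d → Ω → ℝ}

lemma ae_pos (hS : HasSimplexDistribution μ ℓ S) (hℓ : IsDNormStdf ℓ)
    (hSmeas : ∀ i, Measurable (S i)) : ∀ᵐ ω ∂μ, ∀ i, 0 < S i ω := by
  have h := hS 0 fun _ => le_rfl
  simp only [Pi.zero_apply, hℓ.apply_zero, sub_zero, zero_le_one, max_eq_right, one_pow] at h
  rw [ae_iff_measure_eq, measure_univ, ← ENNReal.toReal_eq_one_iff, h]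
  simp only [ofPred_forall]
  exact (MeasurableSet.iInter fun i =>
    measurableSet_lt measurable_const (hSmeas i)).nullMeasurableSet

lemma measure_lt_div_iSup (hS : HasSimplexDistribution μ ℓ S) (hℓ : IsDNormStdf ℓ)
    (hSmeas : ∀ i, Measurable (S i)) {y : Fin d → ℝ} (hy : ∀ i, 0 ≤ y i) {j : Fin d}
    (hj : 0 < y j) {s : ℝ} (hs : 0 ≤ s) :
    μ {ω | s < ℓ y / ⨆ i, y i / S i ω} = ENNReal.ofReal (max 0 (1 - s) ^ (d - 1)) := by
  have : Nonempty (Fin d) := ⟨j⟩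
  have hc : 0 < ℓ y := hj.trans_le (hℓ.le_apply y j)
  have hsurv := hS ((s / ℓ y) • y) fun i => mul_nonneg (div_nonneg hs hc.le) (hy i)
  rw [hℓ.apply_smul (div_nonneg hs hc.le), div_mul_cancel₀ s hc.ne'] at hsurv
  rw [← hsurv, ENNReal.ofReal_toReal (measure_ne_top _ _)]
  refine measure_congr (eventuallyEq_set.mpr ?_)
  filter_upwards [hS.ae_pos hℓ hSmeas] with ω hω
  have hM : 0 < ⨆ i, y i / S i ω :=
    (div_pos hj (hω j)).trans_le (le_ciSup (finite_range fun i => y i / S i ω).bddAbove j)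
  simp only [Pi.smul_apply, smul_eq_mul]
  rw [lt_div_iff₀ hM, Real.mul_iSup_of_nonneg hs, ciSup_lt_iff_of_finite]
  refine forall_congr' fun i => ?_
  rw [mul_div_assoc', div_lt_iff₀ (hω i), div_mul_eq_mul_div, div_lt_iff₀ hc, mul_comm (S i ω)]

lemma map_div_iSup (hS : HasSimplexDistribution μ ℓ S) (hℓ : IsDNormStdf ℓ)
    (hSmeas : ∀ i, Measurable (S i)) (hd : 2 ≤ d) {y : Fin d → ℝ} (hy : ∀ i, 0 ≤ y i)
    {j : Fin d} (hj : 0 < y j) :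
    μ.map (fun ω => ℓ y / ⨆ i, y i / S i ω) = betaOneMeasure (d - 2) := by
  have hZ : Measurable fun ω => ℓ y / ⨆ i, y i / S i ω :=
    measurable_const.div (Measurable.iSup fun i => measurable_const.div (hSmeas i))
  have := Measure.isProbabilityMeasure_map (μ := μ) hZ.aemeasurable
  refine eq_betaOneMeasure_of_measure_Ioi fun s hs => ?_
  rw [Measure.map_apply hZ measurableSet_Ioi, show d - 2 + 1 = d - 1 by omega,
    ← max_eq_right (sub_nonneg.2 hs.2)]
  exact hS.measure_lt_div_iSup hℓ hSmeas hy hj hs.1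

end HasSimplexDistribution

end Simplex

/-- (Marginal stdf identity for a single cluster.) If `S` has the
`ℓ`-simplex distribution, `ρ ∈ (0,1)` and `b = E[Z^(-ρ)]` for `Z` Beta(1, d-1), then for
every coordinatewise nonnegative `x`,
`E[max_i x i / (b * S i ^ ρ)] = (ℓ (x^(1/ρ)))^ρ`. -/
theorem stmt_16
    {Ω : Type*} [MeasurableSpace Ω] (μ : Measure Ω) [IsProbabilityMeasure μ]
    (d : ℕ) (hd : 2 ≤ d)
    (ℓ : (Fin d → ℝ) → ℝ) (hℓ : IsDNormStdf ℓ)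
    (S : Fin d → Ω → ℝ)
    (hSmeas : ∀ i, Measurable (S i))
    (hSsurv : ∀ s : Fin d → ℝ, (∀ i, 0 ≤ s i) →
      (μ {ω | ∀ i, s i < S i ω}).toReal = max 0 (1 - ℓ s) ^ (d - 1))
    (ρ : ℝ) (hρ : ρ ∈ Set.Ioo (0 : ℝ) 1)
    (b : ℝ)
    (hb : b = ∫ s in Set.Ioo (0 : ℝ) 1, ((d : ℝ) - 1) * (1 - s) ^ (d - 2) * s ^ (-ρ)) :
    ∀ x : Fin d → ℝ, (∀ i, 0 ≤ x i) →
      ∫ ω, (⨆ i, x i / (b * S i ω ^ ρ)) ∂μ = ℓ (fun i => x i ^ (1 / ρ)) ^ ρ := by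
  have hS : HasSimplexDistribution μ ℓ S := hSsurv
  intro x hx
  have : Nonempty (Fin d) := ⟨⟨0, by omega⟩⟩
  rcases eq_or_ne x 0 with rfl | hx0
  · simp only [Pi.zero_apply, zero_div, ciSup_const, integral_zero]
    rw [Real.zero_rpow (one_div_ne_zero hρ.1.ne'), ← Pi.zero_def, hℓ.apply_zero,
      Real.zero_rpow hρ.1.ne']
  obtain ⟨j, hj⟩ := Function.ne_iff.mp hx0
  set y : Fin d → ℝ := fun i => x i ^ (1 / ρ)
  have hy : ∀ i, 0 ≤ y i := fun i => Real.rpow_nonneg (hx i) _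
  have hyj : 0 < y j := Real.rpow_pos_of_pos ((hx j).lt_of_ne' hj) _
  have hc : 0 < ℓ y := hyj.trans_le (hℓ.le_apply y j)
  set Z : Ω → ℝ := fun ω => ℓ y / ⨆ i, y i / S i ω
  have hZ : Measurable Z :=
    measurable_const.div (Measurable.iSup fun i => measurable_const.div (hSmeas i))
  have hb' : b = ∫ s, s ^ (-ρ) ∂betaOneMeasure (d - 2) := by
    rw [hb, integral_betaOneMeasure_sub_two hd]
  have hbpos : 0 < b := hb' ▸ integral_rpow_neg_betaOneMeasure_pos (d - 2) hρ.2
  have hM : ∀ᵐ ω ∂μ, ⨆ i, x i / (b * S i ω ^ ρ) = b⁻¹ * ℓ y ^ ρ * Z ω ^ (-ρ) := by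
    filter_upwards [hS.ae_pos hℓ hSmeas] with ω hω
    rw [iSup_div_mul_rpow hx hω hbpos.le hρ.1, mul_assoc,
      Real.rpow_mul_div_rpow_neg (Real.iSup_nonneg fun i => div_nonneg (hy i) (hω i).le) hc]
  calc ∫ ω, ⨆ i, x i / (b * S i ω ^ ρ) ∂μ = b⁻¹ * ℓ y ^ ρ * ∫ s, s ^ (-ρ) ∂μ.map Z := by
        rw [integral_congr_ae hM, integral_const_mul, integral_map hZ.aemeasurable (by fun_prop)]
    _ = ℓ y ^ ρ := by
      rw [hS.map_div_iSup hℓ hSmeas hd hy hyj, ← hb']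
      field_simp
end
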